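/- Let y ∈ Ĩ_n and w ∈ A(y). If i ∈ ℤ and b = w⁻¹(i) > w⁻¹(i+1) = a, then (a,b) is a 2-cycle of y, i.e., (a,b) ∈ C(y). -/

import Mathlib

open Finset

/-- `w` is an element of the affine symmetric group `S̃_n`: a bijection `ℤ → ℤ` with
`w (i + n) = w i + n` for all `i` and `∑_{i=1}^n w i = n (n+1)/2`. -/
def IsAffine (n : ℕ) (w : Equiv.Perm ℤ) : Prop :=
  (∀ i : ℤ, w (i + n) = w i + n) ∧ ∑ i ∈ Finset.Icc (1 : ℤ) (n : ℤ), (w i - i) = 0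

/-- The Coxeter length of `w ∈ S̃_n`: the number of inversions `(i, j)`, `i < j`,
`w i > w j`, counted up to the equivalence `(i,j) ∼ (i+n, j+n)` (representatives with
`i ∈ [n]`). -/
noncomputable def affLen (n : ℕ) (w : Equiv.Perm ℤ) : ℕ :=
  Nat.card {p : ℤ × ℤ // 1 ≤ p.1 ∧ p.1 ≤ (n : ℤ) ∧ p.1 < p.2 ∧ w p.2 < w p.1}

/-- The absolute length of an involution `z ∈ Ĩ_n`: the number of 2-cycles
`(i, j)` with `i < j = z i`, counted up to the equivalence `(i,j) ∼ (i+n, j+n)`. -/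
noncomputable def absLen (n : ℕ) (z : Equiv.Perm ℤ) : ℕ :=
  Nat.card {p : ℤ × ℤ // 1 ≤ p.1 ∧ p.1 ≤ (n : ℤ) ∧ p.1 < p.2 ∧ z p.1 = p.2}

/-- The underlying function of the reflection `t_{i j}`: it sends `i + m n ↦ j + m n` and
`j + m n ↦ i + m n` for all `m`, fixing everything else. -/
def tFun (n : ℕ) (i j x : ℤ) : ℤ :=
  if (n : ℤ) ∣ x - i then x + (j - i) else if (n : ℤ) ∣ x - j then x - (j - i) else x

theorem tFun_comp (n : ℕ) (i j x : ℤ) : tFun n j i (tFun n i j x) = x := by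
  unfold tFun
  by_cases h1 : (n : ℤ) ∣ x - i
  · rw [if_pos h1]
    have c1 : (n : ℤ) ∣ x + (j - i) - j := by
      have e : x + (j - i) - j = x - i := by ring
      rw [e]; exact h1
    rw [if_pos c1]; ring
  · rw [if_neg h1]
    by_cases h2 : (n : ℤ) ∣ x - j
    · rw [if_pos h2]
      have c1 : ¬ (n : ℤ) ∣ x - (j - i) - j := by
        intro hc
        apply h1
        have e : x - i = 2 * (x - j) - (x - (j - i) - j) := by ring
        rw [e]
        exact dvd_sub (Dvd.dvd.mul_left h2 2) hc
      have c2 : (n : ℤ) ∣ x - (j - i) - i := by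
        have e : x - (j - i) - i = x - j := by ring
        rw [e]; exact h2
      rw [if_neg c1, if_pos c2]; ring
    · simp only [if_neg h1, if_neg h2]

/-- The reflection `t_{i j} ∈ S̃_n`. -/
def tPerm (n : ℕ) (i j : ℤ) : Equiv.Perm ℤ :=
  ⟨tFun n i j, tFun n j i, fun x => tFun_comp n i j x, fun x => tFun_comp n j i x⟩

/-- The simple generator `s_i = t_{i, i+1} ∈ S̃_n`. -/
def sPerm (n : ℕ) (i : ℤ) : Equiv.Perm ℤ := tPerm n i (i + 1)

/-- `D` is the Demazure (0-Hecke) product on the affine symmetric group `S̃_n`: the unique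
associative product with `w ∘ s_i = w` if `ℓ(w s_i) < ℓ(w)` and `w ∘ s_i = w s_i` if
`ℓ(w s_i) > ℓ(w)`. -/
def IsDemazure (n : ℕ) (D : Equiv.Perm ℤ → Equiv.Perm ℤ → Equiv.Perm ℤ) : Prop :=
  (∀ u v w : Equiv.Perm ℤ, IsAffine n u → IsAffine n v → IsAffine n w →
    D (D u v) w = D u (D v w)) ∧
  (∀ u v : Equiv.Perm ℤ, IsAffine n u → IsAffine n v → IsAffine n (D u v)) ∧
  (∀ w : Equiv.Perm ℤ, IsAffine n w → D w 1 = w ∧ D 1 w = w) ∧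
  (∀ w : Equiv.Perm ℤ, IsAffine n w → ∀ i : ℤ,
    (affLen n (w * sPerm n i) < affLen n w → D w (sPerm n i) = w) ∧
    (affLen n w < affLen n (w * sPerm n i) → D w (sPerm n i) = w * sPerm n i))

/-- `w` is an atom of the involution `z ∈ Ĩ_n` (relative to the Demazure product `D`):
`w` has minimal length among all `v ∈ S̃_n` with `z = v⁻¹ ∘ v`. -/
def IsAtomOf (n : ℕ) (D : Equiv.Perm ℤ → Equiv.Perm ℤ → Equiv.Perm ℤ)
    (z w : Equiv.Perm ℤ) : Prop :=
  IsAffine n w ∧ D w⁻¹ w = z ∧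
    ∀ v : Equiv.Perm ℤ, IsAffine n v → D v⁻¹ v = z → affLen n w ≤ affLen n v

/-!
Induction on the length of the atom `w`. Write `w = w₂ s_k` at a right descent `k`. Then `w₂`
is an atom of `z₂ = w₂⁻¹ ∘ w₂`, `y = s_k ∘ z₂ ∘ s_k`, and minimality of `w` forces
`z₂ k < z₂ (k + 1)`; so `y = z₂ s_k` if `z₂` fixes `k` and `k + 1`, and `y = s_k z₂ s_k`
otherwise. Put `a = w⁻¹ (i + 1) < b = w⁻¹ i`. Unless `s_k` swaps `a` and `b`, the descent of
`w⁻¹` at `i` passes to `w₂⁻¹ = s_k w⁻¹`, and the induction hypothesis `z₂ (s_k a) = s_k b`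
gives `y a = b` in both cases. If `s_k` swaps them, then also `w = s_i w₂`, so
`y = w₂⁻¹ ∘ s_i ∘ s_i ∘ w₂ = z₂ ∘ s_k`; this excludes `y = s_k z₂ s_k` and leaves
`y a = z₂ (a + 1) = a + 1 = b`.

The rule for `s_i ∘ u` and the identity `(u ∘ v)⁻¹ = v⁻¹ ∘ u⁻¹` follow from the rule for
`u ∘ s_i` and associativity by induction on length; the length changes by exactly one under
`u ↦ u s_k`, since `(p, q) ↦ (s_k p, s_k q)` matches all other inversions of `u` and `u s_k`.
-/

open Equiv

variable {n : ℕ}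

theorem Equiv.Perm.apply_inv_self {α : Type*} (u : Perm α) (x : α) : u (u⁻¹ x) = x :=
  u.apply_symm_apply x

theorem Equiv.Perm.inv_apply_self {α : Type*} (u : Perm α) (x : α) : u⁻¹ (u x) = x :=
  u.symm_apply_apply x

section Periodic

theorem periodic_apply_sub_self {f : ℤ → ℤ} (hf : ∀ x, f (x + n) = f x + n) :
    Function.Periodic (fun x => f x - x) (n : ℤ) := fun x => by
  simp only [hf]; ring

theorem apply_add_of_dvd {f : ℤ → ℤ} (hf : ∀ x, f (x + n) = f x + n) {c : ℤ}
    (hc : (n : ℤ) ∣ c) (x : ℤ) : f (x + c) = f x + c := by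
  obtain ⟨m, rfl⟩ := hc
  have h := (periodic_apply_sub_self hf).int_mul m x
  simp only [Int.cast_id] at h
  rw [mul_comm]
  linarith

theorem apply_eq_of_dvd_sub {f : ℤ → ℤ} (hf : ∀ x, f (x + n) = f x + n) {x y : ℤ}
    (h : (n : ℤ) ∣ x - y) : f x = f y + (x - y) := by
  simpa using apply_add_of_dvd hf h y

theorem apply_succ_sub_apply_of_dvd {f : ℤ → ℤ} (hf : ∀ x, f (x + n) = f x + n) {a b : ℤ}
    (h : (n : ℤ) ∣ a - b) : f (a + 1) - f a = f (b + 1) - f b := by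
  rw [apply_eq_of_dvd_sub hf h, apply_eq_of_dvd_sub hf (show (n : ℤ) ∣ a + 1 - (b + 1) by simpa)]
  ring

theorem Equiv.Perm.inv_apply_add {u : Perm ℤ} (hu : ∀ x, u (x + n) = u x + n) (x : ℤ) :
    u⁻¹ (x + n) = u⁻¹ x + n := by
  rw [Perm.inv_eq_iff_eq, hu, Perm.apply_inv_self]

theorem Equiv.Perm.mul_apply_add {u v : Perm ℤ} (hu : ∀ x, u (x + n) = u x + n)
    (hv : ∀ x, v (x + n) = v x + n) (x : ℤ) : (u * v) (x + n) = (u * v) x + n := by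
  simp only [Perm.mul_apply, hv, hu]

theorem dvd_apply_sub_apply_iff {u : Perm ℤ} (hu : ∀ x, u (x + n) = u x + n) {x y : ℤ} :
    (n : ℤ) ∣ u x - u y ↔ (n : ℤ) ∣ x - y := by
  refine ⟨fun h => ?_, fun h => by rwa [apply_eq_of_dvd_sub hu h, add_sub_cancel_left]⟩
  have := apply_eq_of_dvd_sub (Perm.inv_apply_add hu) h
  simp only [Perm.inv_apply_self] at this
  rwa [this, add_sub_cancel_left]

end Periodic

section Window

def wrap (n : ℕ) (x : ℤ) : ℤ := (x - 1) % n + 1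

theorem wrap_mem_Icc (hn : 0 < n) (x : ℤ) : wrap n x ∈ Icc (1 : ℤ) n := by
  have := Int.emod_nonneg (x - 1) (by positivity : (n : ℤ) ≠ 0)
  have := Int.emod_lt_of_pos (x - 1) (by positivity : (0 : ℤ) < n)
  rw [mem_Icc, wrap]
  omega

theorem dvd_wrap_sub (x : ℤ) : (n : ℤ) ∣ wrap n x - x :=
  ⟨-((x - 1) / n), by rw [wrap, Int.emod_def]; ring⟩

theorem wrap_eq_wrap {x y : ℤ} (h : (n : ℤ) ∣ x - y) : wrap n x = wrap n y := by
  rw [wrap, wrap, ((Int.modEq_of_dvd h).symm.sub_right 1 : x - 1 ≡ y - 1 [ZMOD n])]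

theorem wrap_eq_self {x : ℤ} (hx : x ∈ Icc (1 : ℤ) n) : wrap n x = x := by
  rw [mem_Icc] at hx
  rw [wrap, Int.emod_eq_of_lt (by omega) (by omega)]
  ring

theorem eq_of_dvd_sub_of_mem_Icc {x y : ℤ} (hx : x ∈ Icc (1 : ℤ) n) (hy : y ∈ Icc (1 : ℤ) n)
    (h : (n : ℤ) ∣ x - y) : x = y := by
  rw [← wrap_eq_self hx, ← wrap_eq_self hy, wrap_eq_wrap h]

theorem Function.Periodic.apply_wrap {f : ℤ → ℤ} (hf : Function.Periodic f n) (x : ℤ) :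
    f (wrap n x) = f x := by
  obtain ⟨m, hm⟩ := dvd_wrap_sub (n := n) x
  have := (hf.int_mul m) x
  rw [Int.cast_id, mul_comm] at this
  rwa [show wrap n x = x + n * m by omega]

theorem sum_Icc_apply_perm (hn : 0 < n) {v : Perm ℤ} (hv : ∀ x, v (x + n) = v x + n)
    {f : ℤ → ℤ} (hf : Function.Periodic f n) :
    ∑ x ∈ Icc (1 : ℤ) n, f (v x) = ∑ x ∈ Icc (1 : ℤ) n, f x := by
  have wrap_apply_wrap : ∀ {u : Perm ℤ}, (∀ x, u (x + n) = u x + n) → ∀ x,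
      wrap n (u (wrap n x)) = wrap n (u x) := fun hu x =>
    wrap_eq_wrap ((dvd_apply_sub_apply_iff hu).mpr (dvd_wrap_sub x))
  have hv' := Perm.inv_apply_add hv
  refine Finset.sum_nbij' (fun x => wrap n (v x)) (fun x => wrap n (v⁻¹ x))
    (fun x _ => wrap_mem_Icc hn _) (fun x _ => wrap_mem_Icc hn _) (fun x hx => ?_)
    (fun x hx => ?_) (fun x _ => (hf.apply_wrap _).symm)
  · rw [wrap_apply_wrap hv', Perm.inv_apply_self, wrap_eq_self hx]
  · rw [wrap_apply_wrap hv, Perm.apply_inv_self, wrap_eq_self hx]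

theorem sum_Icc_ite_dvd_sub (hn : 0 < n) (c : ℤ) :
    ∑ x ∈ Icc (1 : ℤ) n, (if (n : ℤ) ∣ x - c then 1 else 0 : ℤ) = 1 := by
  have key : ∀ x ∈ Icc (1 : ℤ) n, ((n : ℤ) ∣ x - c ↔ x = wrap n c) := fun x hx =>
    ⟨fun h => (wrap_eq_self hx).symm.trans (wrap_eq_wrap h),
     fun h => by simpa [h] using dvd_wrap_sub (n := n) c⟩
  rw [Finset.sum_congr rfl fun x hx => if_congr (key x hx) rfl rfl,
    Finset.sum_ite_eq' _ _ (fun _ => (1 : ℤ)), if_pos (wrap_mem_Icc hn c)]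

end Window

section Affine

theorem isAffine_one : IsAffine n 1 :=
  ⟨fun _ => rfl, by simp⟩

theorem IsAffine.mul (hn : 0 < n) {u v : Perm ℤ} (hu : IsAffine n u) (hv : IsAffine n v) :
    IsAffine n (u * v) := by
  refine ⟨Perm.mul_apply_add hu.1 hv.1, ?_⟩
  calc ∑ x ∈ Icc (1 : ℤ) n, ((u * v) x - x)
      = ∑ x ∈ Icc (1 : ℤ) n, (u (v x) - v x) + ∑ x ∈ Icc (1 : ℤ) n, (v x - x) := by
        rw [← Finset.sum_add_distrib]; simp
    _ = 0 := by
        rw [sum_Icc_apply_perm hn hv.1 (periodic_apply_sub_self hu.1), hu.2, hv.2, add_zero]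

theorem IsAffine.inv (hn : 0 < n) {v : Perm ℤ} (hv : IsAffine n v) : IsAffine n v⁻¹ := by
  refine ⟨Perm.inv_apply_add hv.1, ?_⟩
  have h := sum_Icc_apply_perm hn hv.1 (periodic_apply_sub_self (Perm.inv_apply_add hv.1))
  simp only [Perm.inv_apply_self] at h
  rw [← h, ← neg_eq_zero, ← Finset.sum_neg_distrib, ← hv.2]
  simp

end Affine

section SimpleReflection

theorem sPerm_apply_of_dvd {i x : ℤ} (h : (n : ℤ) ∣ x - i) : sPerm n i x = x + 1 := by
  change tFun n i (i + 1) x = _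
  rw [tFun, if_pos h]; ring

theorem not_dvd_sub_of_dvd_sub_succ (hn : 2 ≤ n) {i x : ℤ} (h : (n : ℤ) ∣ x - (i + 1)) :
    ¬ (n : ℤ) ∣ x - i := fun h' => by
  have := Int.le_of_dvd one_pos (by simpa using dvd_sub h' h)
  omega

theorem sPerm_apply_of_dvd_succ (hn : 2 ≤ n) {i x : ℤ} (h : (n : ℤ) ∣ x - (i + 1)) :
    sPerm n i x = x - 1 := by
  change tFun n i (i + 1) x = _
  rw [tFun, if_neg (not_dvd_sub_of_dvd_sub_succ hn h), if_pos h]; ring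

theorem sPerm_apply_of_not_dvd {i x : ℤ} (h₀ : ¬ (n : ℤ) ∣ x - i)
    (h₁ : ¬ (n : ℤ) ∣ x - (i + 1)) : sPerm n i x = x := by
  change tFun n i (i + 1) x = _
  rw [tFun, if_neg h₀, if_neg h₁]

theorem sPerm_apply_cases (hn : 2 ≤ n) (i x : ℤ) :
    ((n : ℤ) ∣ x - i ∧ sPerm n i x = x + 1) ∨
    ((n : ℤ) ∣ x - (i + 1) ∧ sPerm n i x = x - 1) ∨
    (¬ (n : ℤ) ∣ x - i ∧ ¬ (n : ℤ) ∣ x - (i + 1) ∧ sPerm n i x = x) := by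
  by_cases h₀ : (n : ℤ) ∣ x - i
  · exact .inl ⟨h₀, sPerm_apply_of_dvd h₀⟩
  by_cases h₁ : (n : ℤ) ∣ x - (i + 1)
  · exact .inr (.inl ⟨h₁, sPerm_apply_of_dvd_succ hn h₁⟩)
  · exact .inr (.inr ⟨h₀, h₁, sPerm_apply_of_not_dvd h₀ h₁⟩)

theorem sPerm_apply_self (i : ℤ) : sPerm n i i = i + 1 :=
  sPerm_apply_of_dvd (by simp)

theorem sPerm_apply_succ (hn : 2 ≤ n) (i : ℤ) : sPerm n i (i + 1) = i := by
  rw [sPerm_apply_of_dvd_succ hn (by simp)]; ring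

theorem sPerm_sPerm (hn : 2 ≤ n) (i x : ℤ) : sPerm n i (sPerm n i x) = x := by
  rcases sPerm_apply_cases hn i x with ⟨h, e⟩ | ⟨h, e⟩ | ⟨h₀, h₁, e⟩ <;> rw [e]
  · rw [sPerm_apply_of_dvd_succ hn (by simpa using h)]; ring
  · rw [sPerm_apply_of_dvd (by convert h using 1; ring)]; ring
  · exact e

theorem sPerm_mul_self (hn : 2 ≤ n) (i : ℤ) : sPerm n i * sPerm n i = 1 :=
  Perm.ext (sPerm_sPerm hn i)

theorem sPerm_inv (hn : 2 ≤ n) (i : ℤ) : (sPerm n i)⁻¹ = sPerm n i :=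
  inv_eq_of_mul_eq_one_right (sPerm_mul_self hn i)

theorem sPerm_ne_one (i : ℤ) : sPerm n i ≠ 1 := fun h => by
  simpa [h] using sPerm_apply_self (n := n) i

theorem sPerm_apply_add (hn : 2 ≤ n) (i x : ℤ) : sPerm n i (x + n) = sPerm n i x + n := by
  have hdvd : ∀ c, (n : ℤ) ∣ x + n - c ↔ (n : ℤ) ∣ x - c := fun c => by
    rw [show x + n - c = x - c + n by ring, dvd_add_self_right]
  rcases sPerm_apply_cases hn i x with ⟨h, e⟩ | ⟨h, e⟩ | ⟨h₀, h₁, e⟩ <;> rw [e]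
  · rw [sPerm_apply_of_dvd ((hdvd i).mpr h)]; ring
  · rw [sPerm_apply_of_dvd_succ hn ((hdvd _).mpr h)]; ring
  · rw [sPerm_apply_of_not_dvd (mt (hdvd i).mp h₀) (mt (hdvd _).mp h₁)]

theorem isAffine_sPerm (hn : 2 ≤ n) (i : ℤ) : IsAffine n (sPerm n i) := by
  refine ⟨sPerm_apply_add hn i, ?_⟩
  have key : ∀ x : ℤ, sPerm n i x - x = (if (n : ℤ) ∣ x - i then 1 else 0) -
      (if (n : ℤ) ∣ x - (i + 1) then 1 else 0) := fun x => by
    rcases sPerm_apply_cases hn i x with ⟨h, e⟩ | ⟨h, e⟩ | ⟨h₀, h₁, e⟩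
    · rw [e, if_pos h, if_neg]; ring
      exact fun h' => not_dvd_sub_of_dvd_sub_succ hn h' h
    · rw [e, if_neg (not_dvd_sub_of_dvd_sub_succ hn h), if_pos h]; ring
    · rw [e, if_neg h₀, if_neg h₁]; ring
  simp only [key, Finset.sum_sub_distrib, sum_Icc_ite_dvd_sub (by omega : 0 < n), sub_self]

theorem sPerm_apply_lt_apply_iff (hn : 2 ≤ n) {j p q : ℤ} (hpq : p < q) :
    sPerm n j q < sPerm n j p ↔ q = p + 1 ∧ (n : ℤ) ∣ p - j := by
  constructor
  · intro h
    rcases sPerm_apply_cases hn j p with ⟨hp, ep⟩ | ⟨hp, ep⟩ | ⟨-, -, ep⟩ <;>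
      rcases sPerm_apply_cases hn j q with ⟨-, eq⟩ | ⟨-, eq⟩ | ⟨-, -, eq⟩ <;> omega
  · rintro ⟨rfl, hp⟩
    rw [sPerm_apply_of_dvd hp, sPerm_apply_of_dvd_succ hn (by simpa using hp)]
    omega

theorem sPerm_apply_lt_apply (hn : 2 ≤ n) {j p q : ℤ} (hpq : p < q)
    (h : ¬ (q = p + 1 ∧ (n : ℤ) ∣ p - j)) : sPerm n j p < sPerm n j q :=
  lt_of_le_of_ne (not_lt.mp (mt (sPerm_apply_lt_apply_iff hn hpq).mp h))
    ((sPerm n j).injective.ne hpq.ne)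

theorem sPerm_mul_eq_mul_sPerm (hn : 2 ≤ n) {u : Perm ℤ} (hu : ∀ x, u (x + n) = u x + n)
    {i j : ℤ} (hi : (n : ℤ) ∣ u j - i) (hj : u (j + 1) = u j + 1) :
    sPerm n i * u = u * sPerm n j := by
  ext x
  simp only [Perm.mul_apply]
  by_cases h₀ : (n : ℤ) ∣ x - j
  · have hx := apply_eq_of_dvd_sub hu h₀
    rw [sPerm_apply_of_dvd h₀, hx,
      sPerm_apply_of_dvd (by rw [add_sub_right_comm]; exact dvd_add hi h₀),
      apply_eq_of_dvd_sub hu (show (n : ℤ) ∣ x + 1 - (j + 1) by simpa using h₀), hj]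
    ring
  by_cases h₁ : (n : ℤ) ∣ x - (j + 1)
  · have hx := apply_eq_of_dvd_sub hu h₁
    have hdvd : (n : ℤ) ∣ u j + 1 + (x - (j + 1)) - (i + 1) := by
      rw [show u j + 1 + (x - (j + 1)) - (i + 1) = u j - i + (x - (j + 1)) by ring]
      exact dvd_add hi h₁
    rw [sPerm_apply_of_dvd_succ hn h₁, hx, hj, sPerm_apply_of_dvd_succ hn hdvd,
      apply_eq_of_dvd_sub hu (show (n : ℤ) ∣ x - 1 - j by rwa [sub_sub, add_comm 1 j])]
    ring
  · rw [sPerm_apply_of_not_dvd h₀ h₁, sPerm_apply_of_not_dvd]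
    · rw [← dvd_apply_sub_apply_iff hu] at h₀
      exact fun h => h₀ (by rw [show u x - u j = u x - i - (u j - i) by ring]; exact dvd_sub h hi)
    · rw [← dvd_apply_sub_apply_iff hu, hj] at h₁
      exact fun h => h₁ (by
        rw [show u x - (u j + 1) = u x - (i + 1) - (u j - i) by ring]; exact dvd_sub h hi)

end SimpleReflection

section Length

def invSet (n : ℕ) (v : Perm ℤ) : Set (ℤ × ℤ) :=
  {p | 1 ≤ p.1 ∧ p.1 ≤ (n : ℤ) ∧ p.1 < p.2 ∧ v p.2 < v p.1}

theorem affLen_eq_ncard (v : Perm ℤ) : affLen n v = (invSet n v).ncard := rfl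

theorem invSet_finite (hn : 0 < n) {v : Perm ℤ} (hv : ∀ x, v (x + n) = v x + n) :
    (invSet n v).Finite := by
  obtain ⟨M, hM⟩ := ((Icc (1 : ℤ) n).image fun x => |v x| + |v x - x|).exists_le
  refine (Set.finite_Icc ((1 : ℤ), (1 : ℤ)) ((n : ℤ), 2 * M)).subset ?_
  rintro ⟨p, q⟩ ⟨hp₁, hp₂, hpq, hvq⟩
  dsimp only at hp₁ hp₂ hpq hvq
  have hbound := fun x (hx : x ∈ Icc (1 : ℤ) n) =>
    hM _ (Finset.mem_image_of_mem (fun x => |v x| + |v x - x|) hx)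
  have hp := hbound p (mem_Icc.mpr ⟨hp₁, hp₂⟩)
  have hq := hbound _ (wrap_mem_Icc hn q)
  have hwrap := (periodic_apply_sub_self hv).apply_wrap q
  simp only [Set.mem_Icc, Prod.mk_le_mk]
  refine ⟨⟨hp₁, by omega⟩, hp₂, ?_⟩
  have := neg_abs_le (v (wrap n q) - wrap n q)
  have := le_abs_self (v p)
  have := abs_nonneg (v (wrap n q))
  have := abs_nonneg (v p - p)
  omega

def toWindow (n : ℕ) (p : ℤ × ℤ) : ℤ × ℤ := (wrap n p.1, p.2 + (wrap n p.1 - p.1))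

theorem toWindow_add_of_dvd {c : ℤ} (hc : (n : ℤ) ∣ c) (p q : ℤ) :
    toWindow n (p + c, q + c) = toWindow n (p, q) := by
  have h := wrap_eq_wrap (n := n) (show (n : ℤ) ∣ p + c - p by simpa using hc)
  simp only [toWindow, h, Prod.mk.injEq, true_and]
  ring

theorem toWindow_eq (p q : ℤ) :
    toWindow n (p, q) = (p + (wrap n p - p), q + (wrap n p - p)) := by
  simp [toWindow]

theorem toWindow_of_mem_Icc {p : ℤ} (hp : p ∈ Icc (1 : ℤ) n) (q : ℤ) :
    toWindow n (p, q) = (p, q) := by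
  simp [toWindow, wrap_eq_self hp]

theorem toWindow_mem_invSet (hn : 0 < n) {v : Perm ℤ} (hv : ∀ x, v (x + n) = v x + n)
    {p q : ℤ} (hpq : p < q) (hvpq : v q < v p) : toWindow n (p, q) ∈ invSet n v := by
  have hd := dvd_wrap_sub (n := n) p
  have hm := mem_Icc.mp (wrap_mem_Icc hn p)
  have hvp := apply_add_of_dvd hv hd p
  have hvq := apply_add_of_dvd hv hd q
  rw [add_sub_cancel] at hvp
  simp only [toWindow]
  refine ⟨hm.1, hm.2, by omega, ?_⟩
  rw [hvq, hvp]
  omega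

theorem toWindow_mem_invSet_iff (hn : 0 < n) {v : Perm ℤ} (hv : ∀ x, v (x + n) = v x + n)
    (k : ℤ) : toWindow n (k, k + 1) ∈ invSet n v ↔ v (k + 1) < v k := by
  refine ⟨fun ⟨_, _, _, h⟩ => ?_, toWindow_mem_invSet hn hv (lt_add_one k)⟩
  have hd := dvd_wrap_sub (n := n) k
  simp only [toWindow] at h
  rw [apply_add_of_dvd hv hd, show wrap n k = k + (wrap n k - k) by ring,
    apply_add_of_dvd hv hd] at h
  omega

/-- The bijection between the inversions of `v` and of `v * sPerm n k` other than the
inversion at `k` itself. -/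
def reflectPair (n : ℕ) (k : ℤ) (p : ℤ × ℤ) : ℤ × ℤ :=
  toWindow n (sPerm n k p.1, sPerm n k p.2)

theorem reflectPair_add_of_dvd (hn : 2 ≤ n) {k c : ℤ} (hc : (n : ℤ) ∣ c) (p q : ℤ) :
    reflectPair n k (p + c, q + c) = reflectPair n k (p, q) := by
  simp only [reflectPair, apply_add_of_dvd (sPerm_apply_add hn k) hc, toWindow_add_of_dvd hc]

theorem reflectPair_reflectPair (hn : 2 ≤ n) (k : ℤ) {p : ℤ × ℤ}
    (hp : 1 ≤ p.1 ∧ p.1 ≤ (n : ℤ)) : reflectPair n k (reflectPair n k p) = p := by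
  obtain ⟨p, q⟩ := p
  have hd := dvd_wrap_sub (n := n) (sPerm n k p)
  rw [show reflectPair n k (p, q) = _ from toWindow_eq _ _, reflectPair_add_of_dvd hn hd,
    reflectPair, sPerm_sPerm hn, sPerm_sPerm hn, toWindow_of_mem_Icc (mem_Icc.mpr hp)]

theorem reflectPair_mem_invSet (hn : 2 ≤ n) {v : Perm ℤ} (hv : ∀ x, v (x + n) = v x + n)
    (k : ℤ) {p : ℤ × ℤ} (hp : p ∈ invSet n (v * sPerm n k) \ {toWindow n (k, k + 1)}) :
    reflectPair n k p ∈ invSet n v \ {toWindow n (k, k + 1)} := by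
  obtain ⟨⟨hp₁, hp₂, hpq, hvpq⟩, hpe⟩ := hp
  have hs : sPerm n k p.1 < sPerm n k p.2 := by
    refine sPerm_apply_lt_apply hn hpq fun ⟨hq, hpk⟩ => hpe ?_
    have := eq_of_dvd_sub_of_mem_Icc (mem_Icc.mpr ⟨hp₁, hp₂⟩) (wrap_mem_Icc (by omega) k)
      (by simpa using dvd_sub hpk (dvd_wrap_sub k))
    rw [Set.mem_singleton_iff, toWindow_eq, ← this, Prod.ext_iff]
    constructor <;> dsimp only <;> omega
  refine ⟨toWindow_mem_invSet (by omega) hv hs hvpq, fun he => ?_⟩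
  have := reflectPair_reflectPair hn k ⟨hp₁, hp₂⟩
  rw [Set.mem_singleton_iff.mp he, toWindow_eq,
    reflectPair_add_of_dvd hn (dvd_wrap_sub k), reflectPair, sPerm_apply_self,
    sPerm_apply_succ hn, toWindow_eq] at this
  rw [← this] at hpq
  dsimp only at hpq
  omega

theorem ncard_invSet_mul_sPerm_diff (hn : 2 ≤ n) {v : Perm ℤ}
    (hv : ∀ x, v (x + n) = v x + n) (k : ℤ) :
    (invSet n (v * sPerm n k) \ {toWindow n (k, k + 1)}).ncard =
      (invSet n v \ {toWindow n (k, k + 1)}).ncard := by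
  have hvs := Perm.mul_apply_add hv (sPerm_apply_add hn k)
  have hinj : ∀ u : Perm ℤ, Set.InjOn (reflectPair n k) (invSet n u \ {toWindow n (k, k + 1)}) :=
    fun u p hp q hq h => by
      rw [← reflectPair_reflectPair hn k ⟨hp.1.1, hp.1.2.1⟩,
        ← reflectPair_reflectPair hn k ⟨hq.1.1, hq.1.2.1⟩, h]
  have hvss : v * sPerm n k * sPerm n k = v := by rw [mul_assoc, sPerm_mul_self hn, mul_one]
  apply le_antisymm
  · exact Set.ncard_le_ncard_of_injOn _ (fun p hp => reflectPair_mem_invSet hn hv k hp)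
      (hinj _) ((invSet_finite (by omega) hv).sdiff)
  · refine Set.ncard_le_ncard_of_injOn _ (fun p hp => ?_) (hinj _)
      ((invSet_finite (by omega) hvs).sdiff)
    exact reflectPair_mem_invSet hn hvs k (by rwa [hvss])

theorem affLen_mul_sPerm_of_lt (hn : 2 ≤ n) {v : Perm ℤ} (hv : ∀ x, v (x + n) = v x + n)
    {k : ℤ} (hk : v k < v (k + 1)) : affLen n (v * sPerm n k) = affLen n v + 1 := by
  have hvs := Perm.mul_apply_add hv (sPerm_apply_add hn k)
  have hmem : toWindow n (k, k + 1) ∈ invSet n (v * sPerm n k) := by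
    rw [toWindow_mem_invSet_iff (by omega) hvs]
    simpa [sPerm_apply_self, sPerm_apply_succ hn] using hk
  have hnmem : toWindow n (k, k + 1) ∉ invSet n v := by
    rw [toWindow_mem_invSet_iff (by omega) hv]
    exact hk.asymm
  rw [affLen_eq_ncard, affLen_eq_ncard,
    ← Set.ncard_sdiff_singleton_add_one hmem (invSet_finite (by omega) hvs),
    ncard_invSet_mul_sPerm_diff hn hv, Set.sdiff_singleton_eq_self hnmem]

theorem affLen_mul_sPerm_of_gt (hn : 2 ≤ n) {v : Perm ℤ} (hv : ∀ x, v (x + n) = v x + n)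
    {k : ℤ} (hk : v (k + 1) < v k) : affLen n (v * sPerm n k) + 1 = affLen n v := by
  have hvs := Perm.mul_apply_add hv (sPerm_apply_add hn k)
  have h := affLen_mul_sPerm_of_lt hn hvs (k := k)
    (by simpa [sPerm_apply_self, sPerm_apply_succ hn] using hk)
  rwa [mul_assoc, sPerm_mul_self hn, mul_one, eq_comm] at h

theorem IsAffine.eq_one_of_forall_lt_succ (hn : 0 < n) {v : Perm ℤ} (hv : IsAffine n v)
    (h : ∀ x, v x < v (x + 1)) : v = 1 := by
  have hmono : StrictMono v := strictMono_int_of_lt_succ h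
  have hstep : ∀ x, v (x + 1) = v x + 1 := fun x => by
    obtain ⟨t, ht⟩ := v.surjective (v x + 1)
    rcases le_or_gt t x with htx | htx
    · have := hmono.monotone htx; omega
    · have := hmono.monotone (show x + 1 ≤ t by omega); have := h x; omega
  have hconst : ∀ x, v x - x = v 0 := fun x => by
    induction x using Int.induction_on with
    | zero => simp
    | succ m ih => rw [hstep]; omega
    | pred m ih => have := hstep (-m - 1); rw [sub_add_cancel] at this; omega
  have hsum := hv.2
  rw [Finset.sum_congr rfl fun x _ => hconst x, Finset.sum_const, Int.card_Icc,
    show ((n : ℤ) + 1 - 1).toNat = n by omega, nsmul_eq_mul] at hsum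
  have hv0 : v 0 = 0 := (mul_eq_zero.mp hsum).resolve_left (by positivity)
  ext x
  have := hconst x
  simp only [Perm.one_apply]
  omega

theorem IsAffine.exists_descent (hn : 0 < n) {v : Perm ℤ} (hv : IsAffine n v) (h1 : v ≠ 1) :
    ∃ k, v (k + 1) < v k := by
  by_contra! h
  exact h1 (hv.eq_one_of_forall_lt_succ hn fun x =>
    (h x).lt_of_ne fun e => by simpa using v.injective e)

theorem IsAffine.induction_on (hn : 2 ≤ n) {P : ∀ u, IsAffine n u → Prop}
    (one : P 1 isAffine_one)
    (mul_sPerm : ∀ v k (hv : IsAffine n v), v k < v (k + 1) → P v hv →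
      P (v * sPerm n k) (hv.mul (by omega) (isAffine_sPerm hn k)))
    (u : Perm ℤ) (hu : IsAffine n u) : P u hu := by
  induction hN : affLen n u using Nat.strong_induction_on generalizing u with
  | _ N ih =>
  by_cases h1 : u = 1
  · subst h1; exact one
  obtain ⟨k, hk⟩ := hu.exists_descent (by omega) h1
  have hus : IsAffine n (u * sPerm n k) := hu.mul (by omega) (isAffine_sPerm hn k)
  have hlt := affLen_mul_sPerm_of_gt hn hu.1 hk
  have hmul := mul_sPerm _ k hus (by simpa [sPerm_apply_self, sPerm_apply_succ hn] using hk)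
    (ih _ (by omega) _ hus rfl)
  simp only [mul_assoc, sPerm_mul_self hn, mul_one] at hmul
  exact hmul

end Length

namespace IsDemazure

variable {D : Perm ℤ → Perm ℤ → Perm ℤ}

theorem assoc (hD : IsDemazure n D) {u v w : Perm ℤ} (hu : IsAffine n u) (hv : IsAffine n v)
    (hw : IsAffine n w) : D (D u v) w = D u (D v w) :=
  hD.1 u v w hu hv hw

theorem isAffine (hD : IsDemazure n D) {u v : Perm ℤ} (hu : IsAffine n u) (hv : IsAffine n v) :
    IsAffine n (D u v) :=
  hD.2.1 u v hu hv

theorem one_right (hD : IsDemazure n D) {u : Perm ℤ} (hu : IsAffine n u) : D u 1 = u :=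
  (hD.2.2.1 u hu).1

theorem one_left (hD : IsDemazure n D) {u : Perm ℤ} (hu : IsAffine n u) : D 1 u = u :=
  (hD.2.2.1 u hu).2

theorem mul_sPerm_of_gt (hD : IsDemazure n D) (hn : 2 ≤ n) {v : Perm ℤ} (hv : IsAffine n v)
    {k : ℤ} (hk : v (k + 1) < v k) : D v (sPerm n k) = v :=
  (hD.2.2.2 v hv k).1 (by have := affLen_mul_sPerm_of_gt hn hv.1 hk; omega)

theorem mul_sPerm_of_lt (hD : IsDemazure n D) (hn : 2 ≤ n) {v : Perm ℤ} (hv : IsAffine n v)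
    {k : ℤ} (hk : v k < v (k + 1)) : D v (sPerm n k) = v * sPerm n k :=
  (hD.2.2.2 v hv k).2 (by have := affLen_mul_sPerm_of_lt hn hv.1 hk; omega)

theorem affLen_mul_sPerm_le (hD : IsDemazure n D) (hn : 2 ≤ n) {v : Perm ℤ}
    (hv : IsAffine n v) (k : ℤ) : affLen n (D v (sPerm n k)) ≤ affLen n v + 1 := by
  rcases lt_trichotomy (v k) (v (k + 1)) with hk | hk | hk
  · rw [hD.mul_sPerm_of_lt hn hv hk, affLen_mul_sPerm_of_lt hn hv.1 hk]
  · simp at hk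
  · rw [hD.mul_sPerm_of_gt hn hv hk]; omega

theorem sPerm_mul (hD : IsDemazure n D) (hn : 2 ≤ n) {u : Perm ℤ} (hu : IsAffine n u)
    (i : ℤ) : D (sPerm n i) u = if u⁻¹ (i + 1) < u⁻¹ i then u else sPerm n i * u := by
  induction u, hu using IsAffine.induction_on hn generalizing i with
  | one => simpa using hD.one_right (isAffine_sPerm hn i)
  | mul_sPerm u j hu hj ih =>
  have hs := isAffine_sPerm hn i
  have hsj := isAffine_sPerm hn j
  have hinv : ∀ x, (u * sPerm n j)⁻¹ x = sPerm n j (u⁻¹ x) := fun x => by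
    rw [mul_inv_rev, sPerm_inv hn]; rfl
  have hassoc : D (sPerm n i) (u * sPerm n j) = D (D (sPerm n i) u) (sPerm n j) := by
    rw [← hD.mul_sPerm_of_lt hn hu hj, hD.assoc hs hu hsj]
  have hui := u.apply_inv_self i
  have hui' := u.apply_inv_self (i + 1)
  rw [hassoc, ih, hinv, hinv]
  rcases lt_trichotomy (u⁻¹ (i + 1)) (u⁻¹ i) with hlt | heq | hgt
  · rw [if_pos hlt, hD.mul_sPerm_of_lt hn hu hj, if_pos]
    refine sPerm_apply_lt_apply hn hlt fun ⟨hsucc, hdvd⟩ => ?_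
    have := apply_succ_sub_apply_of_dvd hu.1 hdvd
    rw [← hsucc] at this
    omega
  · simp at heq
  rw [if_neg hgt.asymm]
  by_cases hflip : u (j + 1) = u j + 1 ∧ (n : ℤ) ∣ u j - i
  -- `u` carries `j, j + 1` onto `i, i + 1` modulo `n`, so `sPerm n i * u = u * sPerm n j`
  · have hcomm := sPerm_mul_eq_mul_sPerm hn hu.1 hflip.2 hflip.1
    have hdvd : (n : ℤ) ∣ u⁻¹ i - j := by
      rw [← dvd_apply_sub_apply_iff hu.1, hui]
      simpa using dvd_neg.mpr hflip.2
    have hsucc : u⁻¹ (i + 1) = u⁻¹ i + 1 := by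
      have := apply_succ_sub_apply_of_dvd hu.1 hdvd
      rw [Perm.inv_eq_iff_eq]
      omega
    rw [hcomm, hD.mul_sPerm_of_gt hn (hu.mul (by omega) hsj) (by simp [sPerm_apply_self,
      sPerm_apply_succ hn, hj]), if_pos ((sPerm_apply_lt_apply_iff hn hgt).mpr ⟨hsucc, hdvd⟩)]
  · have hasc : (sPerm n i * u) j < (sPerm n i * u) (j + 1) := sPerm_apply_lt_apply hn hj hflip
    rw [hD.mul_sPerm_of_lt hn (hs.mul (by omega) hu) hasc, if_neg, mul_assoc]
    intro hlt
    obtain ⟨hsucc, hdvd⟩ := (sPerm_apply_lt_apply_iff hn hgt).mp hlt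
    have := apply_succ_sub_apply_of_dvd hu.1 hdvd
    rw [← hsucc, hui', hui] at this
    refine hflip ⟨by omega, ?_⟩
    rw [apply_eq_of_dvd_sub hu.1 (show (n : ℤ) ∣ j - u⁻¹ i by simpa using dvd_neg.mpr hdvd), hui]
    simpa using dvd_neg.mpr hdvd

theorem inv_rev_sPerm (hD : IsDemazure n D) (hn : 2 ≤ n) {v : Perm ℤ} (hv : IsAffine n v)
    (k : ℤ) : (D v (sPerm n k))⁻¹ = D (sPerm n k) v⁻¹ := by
  rw [hD.sPerm_mul hn (hv.inv (by omega)), inv_inv]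
  rcases lt_trichotomy (v (k + 1)) (v k) with hk | hk | hk
  · rw [hD.mul_sPerm_of_gt hn hv hk, if_pos hk]
  · simp at hk
  · rw [hD.mul_sPerm_of_lt hn hv hk, if_neg hk.asymm, mul_inv_rev, sPerm_inv hn]

theorem inv_rev (hD : IsDemazure n D) (hn : 2 ≤ n) {g h : Perm ℤ} (hg : IsAffine n g)
    (hh : IsAffine n h) : (D g h)⁻¹ = D h⁻¹ g⁻¹ := by
  have hg' := hg.inv (by omega)
  induction h, hh using IsAffine.induction_on hn with
  | one => rw [hD.one_right hg, inv_one, hD.one_left hg']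
  | mul_sPerm h k hh hk ih =>
  have hs := isAffine_sPerm hn k
  have hh' := hh.inv (by omega)
  calc (D g (h * sPerm n k))⁻¹ = (D (D g h) (sPerm n k))⁻¹ := by
        rw [← hD.mul_sPerm_of_lt hn hh hk, hD.assoc hg hh hs]
    _ = D (sPerm n k) (D h⁻¹ g⁻¹) := by rw [hD.inv_rev_sPerm hn (hD.isAffine hg hh), ih]
    _ = D (D (sPerm n k) h⁻¹) g⁻¹ := (hD.assoc hs hh' hg').symm
    _ = D (h * sPerm n k)⁻¹ g⁻¹ := by
        rw [hD.sPerm_mul hn hh', inv_inv, if_neg hk.asymm, mul_inv_rev, sPerm_inv hn]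

theorem inv_mul_self_inv (hD : IsDemazure n D) (hn : 2 ≤ n) {v : Perm ℤ} (hv : IsAffine n v) :
    (D v⁻¹ v)⁻¹ = D v⁻¹ v := by
  rw [hD.inv_rev hn (hv.inv (by omega)) hv, inv_inv]

theorem mul_sPerm_mul_sPerm_of_gt (hD : IsDemazure n D) (hn : 2 ≤ n) {v : Perm ℤ}
    (hv : IsAffine n v) {k : ℤ} (hk : v (k + 1) < v k) : D (v * sPerm n k) (sPerm n k) = v := by
  rw [hD.mul_sPerm_of_lt hn (hv.mul (by omega) (isAffine_sPerm hn k))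
    (by simpa [sPerm_apply_self, sPerm_apply_succ hn] using hk), mul_assoc, sPerm_mul_self hn,
    mul_one]

theorem inv_mul_self_mul_sPerm (hD : IsDemazure n D) (hn : 2 ≤ n) {v : Perm ℤ}
    (hv : IsAffine n v) (k : ℤ) :
    D (D v (sPerm n k))⁻¹ (D v (sPerm n k)) = D (sPerm n k) (D (D v⁻¹ v) (sPerm n k)) := by
  have hs := isAffine_sPerm hn k
  have hv' := hv.inv (by omega)
  rw [hD.inv_rev_sPerm hn hv, hD.assoc hs hv' (hD.isAffine hv hs), hD.assoc hv' hv hs]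

/-- When `v` swaps `a, a + 1` into `i + 1, i` and `a ≡ k`, the simple reflection `sPerm n k`
on the right of `v` is also `sPerm n i` on its left, so it can be absorbed on either side. -/
theorem inv_mul_self_of_swap (hD : IsDemazure n D) (hn : 2 ≤ n) {v : Perm ℤ}
    (hv : IsAffine n v) {a i k : ℤ} (ha : v a = i + 1) (ha' : v (a + 1) = i)
    (hak : (n : ℤ) ∣ a - k) :
    D v⁻¹ v = D (D (v * sPerm n k)⁻¹ (v * sPerm n k)) (sPerm n k) := by
  set v₂ := v * sPerm n k
  have hv₂ : IsAffine n v₂ := hv.mul (by omega) (isAffine_sPerm hn k)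
  have hv₂a : v₂ a = i := by
    simp [v₂, sPerm_apply_of_dvd hak, ha']
  have hv₂a' : v₂ (a + 1) = i + 1 := by
    simp [v₂, sPerm_apply_of_dvd_succ hn (show (n : ℤ) ∣ a + 1 - (k + 1) by simpa), ha]
  have hstep := apply_succ_sub_apply_of_dvd hv₂.1 hak
  have hdvd : (n : ℤ) ∣ v₂ k - i := by
    rw [apply_eq_of_dvd_sub hv₂.1 (show (n : ℤ) ∣ k - a by simpa using dvd_neg.mpr hak), hv₂a]
    simpa using dvd_neg.mpr hak
  have hcomm : sPerm n i * v₂ = v := by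
    rw [sPerm_mul_eq_mul_sPerm hn hv₂.1 hdvd (by omega), mul_assoc, sPerm_mul_self hn, mul_one]
  have hvk : v (k + 1) < v k := by
    have := apply_succ_sub_apply_of_dvd hv.1 hak
    omega
  have hv₂inv : v₂⁻¹ i < v₂⁻¹ (i + 1) := by
    rw [← hv₂a', ← hv₂a, Perm.inv_apply_self, Perm.inv_apply_self]
    omega
  have hvinv : v⁻¹ (i + 1) < v⁻¹ i := by
    rw [← ha, ← ha', Perm.inv_apply_self, Perm.inv_apply_self]
    omega
  have hv₂' := hv₂.inv (by omega)
  calc D v⁻¹ v = D (D v₂⁻¹ (sPerm n i)) v := by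
        rw [hD.mul_sPerm_of_lt hn hv₂' hv₂inv, ← sPerm_inv hn, ← mul_inv_rev, hcomm]
    _ = D v₂⁻¹ v := by
        rw [hD.assoc hv₂' (isAffine_sPerm hn i) hv, hD.sPerm_mul hn hv, if_pos hvinv]
    _ = D (D v₂⁻¹ v₂) (sPerm n k) := by
        rw [hD.assoc hv₂' hv₂ (isAffine_sPerm hn k), hD.mul_sPerm_mul_sPerm_of_gt hn hv hvk]

section Involution

variable {z : Perm ℤ}

theorem sPerm_conj_of_gt (hD : IsDemazure n D) (hn : 2 ≤ n) (hz : IsAffine n z)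
    (hzz : z⁻¹ = z) {k : ℤ} (hk : z (k + 1) < z k) : D (sPerm n k) (D z (sPerm n k)) = z := by
  rw [hD.mul_sPerm_of_gt hn hz hk, hD.sPerm_mul hn hz, hzz, if_pos hk]

theorem sPerm_conj_of_fixed (hD : IsDemazure n D) (hn : 2 ≤ n) (hz : IsAffine n z)
    (hzz : z⁻¹ = z) {k : ℤ} (hk₀ : z k = k) (hk₁ : z (k + 1) = k + 1) :
    D (sPerm n k) (D z (sPerm n k)) = z * sPerm n k := by
  have hzs := hz.mul (by omega) (isAffine_sPerm hn k)
  rw [hD.mul_sPerm_of_lt hn hz (by omega), hD.sPerm_mul hn hzs, if_pos]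
  simp [mul_inv_rev, sPerm_inv hn, hzz, hk₀, hk₁, sPerm_apply_self, sPerm_apply_succ hn]

theorem sPerm_conj_of_lt (hD : IsDemazure n D) (hn : 2 ≤ n) (hz : IsAffine n z)
    (hzz : z⁻¹ = z) {k : ℤ} (hk : z k < z (k + 1)) (hfix : ¬ (z k = k ∧ z (k + 1) = k + 1)) :
    D (sPerm n k) (D z (sPerm n k)) = sPerm n k * (z * sPerm n k) := by
  have hzs := hz.mul (by omega) (isAffine_sPerm hn k)
  rw [hD.mul_sPerm_of_lt hn hz hk, hD.sPerm_mul hn hzs, if_neg]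
  simp only [mul_inv_rev, sPerm_inv hn, hzz, Perm.mul_apply]
  intro hlt
  obtain ⟨hsucc, hdvd⟩ := (sPerm_apply_lt_apply_iff hn hk).mp hlt
  -- `z k = k + c` with `n ∣ c` gives `k = z (z k) = k + 2 c`
  have hzk := apply_eq_of_dvd_sub hz.1 hdvd
  have hinvol : z (z k) = k := by have h := z.inv_apply_self k; rwa [hzz] at h
  rw [hinvol] at hzk
  exact hfix ⟨by omega, by omega⟩

theorem sPerm_conj_apply_of_apply (hD : IsDemazure n D) (hn : 2 ≤ n) (hz : IsAffine n z)
    (hzz : z⁻¹ = z) {k a b : ℤ} (hk : z k < z (k + 1)) (hab : a ≠ b)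
    (h : z (sPerm n k a) = sPerm n k b) : D (sPerm n k) (D z (sPerm n k)) a = b := by
  by_cases hfix : z k = k ∧ z (k + 1) = k + 1
  · rw [hD.sPerm_conj_of_fixed hn hz hzz hfix.1 hfix.2, Perm.mul_apply, h]
    have hfixed : ∀ c, z c = c → ¬ (n : ℤ) ∣ sPerm n k b - c := fun c hc hdvd => by
      have hzb : z (sPerm n k b) = sPerm n k b := by
        rw [apply_eq_of_dvd_sub hz.1 hdvd, hc, add_sub_cancel]
      exact hab ((sPerm n k).injective (z.injective (h.trans hzb.symm)))
    have := sPerm_apply_of_not_dvd (hfixed k hfix.1) (hfixed (k + 1) hfix.2)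
    rwa [sPerm_sPerm hn, eq_comm] at this
  · rw [hD.sPerm_conj_of_lt hn hz hzz hk hfix, Perm.mul_apply, Perm.mul_apply, h,
      sPerm_sPerm hn]

end Involution

end IsDemazure

namespace IsAtomOf

variable {D : Perm ℤ → Perm ℤ → Perm ℤ} {y w : Perm ℤ}

theorem eq_sPerm_conj (hD : IsDemazure n D) (hn : 2 ≤ n) (hw : IsAtomOf n D y w) {k : ℤ}
    (hk : w (k + 1) < w k) :
    y = D (sPerm n k) (D (D (w * sPerm n k)⁻¹ (w * sPerm n k)) (sPerm n k)) := by
  rw [← hD.inv_mul_self_mul_sPerm hn (hw.1.mul (by omega) (isAffine_sPerm hn k)),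
    hD.mul_sPerm_mul_sPerm_of_gt hn hw.1 hk, hw.2.1]

theorem mul_sPerm (hD : IsDemazure n D) (hn : 2 ≤ n) (hw : IsAtomOf n D y w) {k : ℤ}
    (hk : w (k + 1) < w k) :
    IsAtomOf n D (D (w * sPerm n k)⁻¹ (w * sPerm n k)) (w * sPerm n k) := by
  refine ⟨hw.1.mul (by omega) (isAffine_sPerm hn k), rfl, fun v hv hvz => ?_⟩
  have hvy : D (D v (sPerm n k))⁻¹ (D v (sPerm n k)) = y := by
    rw [hD.inv_mul_self_mul_sPerm hn hv, hvz, ← hw.eq_sPerm_conj hD hn hk]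
  have := hw.2.2 _ (hD.isAffine hv (isAffine_sPerm hn k)) hvy
  have := hD.affLen_mul_sPerm_le hn hv k
  have := affLen_mul_sPerm_of_gt hn hw.1.1 hk
  omega

/-- Otherwise `y` would equal `D (w * sPerm n k)⁻¹ (w * sPerm n k)`, which has the shorter
`w * sPerm n k` as an atom. -/
theorem inv_mul_self_mul_sPerm_apply_lt (hD : IsDemazure n D) (hn : 2 ≤ n)
    (hw : IsAtomOf n D y w) {k : ℤ} (hk : w (k + 1) < w k) :
    D (w * sPerm n k)⁻¹ (w * sPerm n k) k < D (w * sPerm n k)⁻¹ (w * sPerm n k) (k + 1) := by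
  have hws := hw.1.mul (by omega) (isAffine_sPerm hn k)
  rcases lt_trichotomy (D (w * sPerm n k)⁻¹ (w * sPerm n k) k)
    (D (w * sPerm n k)⁻¹ (w * sPerm n k) (k + 1)) with hlt | heq | hgt
  · exact hlt
  · simp at heq
  · have hy := hw.eq_sPerm_conj hD hn hk
    rw [hD.sPerm_conj_of_gt hn (hD.isAffine (hws.inv (by omega)) hws)
      (hD.inv_mul_self_inv hn hws) hgt] at hy
    have := hw.2.2 _ hws hy.symm
    have := affLen_mul_sPerm_of_gt hn hw.1.1 hk
    omega

theorem apply_of_swap (hD : IsDemazure n D) (hn : 2 ≤ n) (hw : IsAtomOf n D y w)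
    {a i k : ℤ} (ha : w a = i + 1) (ha' : w (a + 1) = i) (hak : (n : ℤ) ∣ a - k) :
    y a = a + 1 := by
  have hk : w (k + 1) < w k := by
    have := apply_succ_sub_apply_of_dvd hw.1.1 hak
    omega
  set z := D (w * sPerm n k)⁻¹ (w * sPerm n k)
  have hws := hw.1.mul (by omega) (isAffine_sPerm hn k)
  have hz : IsAffine n z := hD.isAffine (hws.inv (by omega)) hws
  have hzk := hw.inv_mul_self_mul_sPerm_apply_lt hD hn hk
  have hy : y = z * sPerm n k := by
    rw [← hw.2.1, hD.inv_mul_self_of_swap hn hw.1 ha ha' hak, hD.mul_sPerm_of_lt hn hz hzk]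
  by_cases hfix : z k = k ∧ z (k + 1) = k + 1
  · rw [hy, Perm.mul_apply, sPerm_apply_of_dvd hak,
      apply_eq_of_dvd_sub hz.1 (show (n : ℤ) ∣ a + 1 - (k + 1) by simpa), hfix.2]
    ring
  · have hconj := hw.eq_sPerm_conj hD hn hk
    rw [hD.sPerm_conj_of_lt hn hz (hD.inv_mul_self_inv hn hws) hzk hfix, hy, eq_comm,
      mul_eq_right] at hconj
    exact absurd hconj (sPerm_ne_one k)

theorem apply_inv_succ (hD : IsDemazure n D) (hn : 2 ≤ n) (hw : IsAtomOf n D y w) {i : ℤ}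
    (h : w⁻¹ (i + 1) < w⁻¹ i) : y (w⁻¹ (i + 1)) = w⁻¹ i := by
  induction hN : affLen n w using Nat.strong_induction_on generalizing w y i with
  | _ N ih =>
  obtain ⟨k, hk⟩ := hw.1.exists_descent (by omega) (by rintro rfl; simp at h)
  by_cases hswap : w⁻¹ i = w⁻¹ (i + 1) + 1 ∧ (n : ℤ) ∣ w⁻¹ (i + 1) - k
  · rw [hswap.1]
    refine hw.apply_of_swap hD hn (i := i) (by simp) ?_ hswap.2
    rw [← hswap.1, Perm.apply_inv_self]
  have hinv : ∀ x, (w * sPerm n k)⁻¹ x = sPerm n k (w⁻¹ x) := fun x => by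
    rw [mul_inv_rev, sPerm_inv hn]; rfl
  have hws := hw.1.mul (by omega) (isAffine_sPerm hn k)
  have hIH := ih _ (by have := affLen_mul_sPerm_of_gt hn hw.1.1 hk; omega)
    (hw.mul_sPerm hD hn hk) (i := i)
    (by rw [hinv, hinv]; exact sPerm_apply_lt_apply hn h hswap) rfl
  rw [hinv, hinv] at hIH
  rw [hw.eq_sPerm_conj hD hn hk]
  exact hD.sPerm_conj_apply_of_apply hn (hD.isAffine (hws.inv (by omega)) hws)
    (hD.inv_mul_self_inv hn hws) (hw.inv_mul_self_mul_sPerm_apply_lt hD hn hk) h.ne hIH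

end IsAtomOf

theorem atom_descent_cycle_general (n : ℕ) (hn : 2 ≤ n)
    (D : Equiv.Perm ℤ → Equiv.Perm ℤ → Equiv.Perm ℤ) (hD : IsDemazure n D)
    (y : Equiv.Perm ℤ)
    (w : Equiv.Perm ℤ) (hw : IsAtomOf n D y w)
    (i : ℤ) (h : w⁻¹ (i + 1) < w⁻¹ i) :
    y (w⁻¹ (i + 1)) = w⁻¹ i :=
  hw.apply_inv_succ hD hn h

/-- If `y ∈ Ĩ_n`, `w ∈ A(y)`, and `b = w⁻¹ i > w⁻¹ (i+1) = a`, then `(a, b)` is a 2-cycle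
of `y`, i.e. `y a = b`. -/
theorem atom_descent_cycle (n : ℕ) (hn : 2 ≤ n)
    (D : Equiv.Perm ℤ → Equiv.Perm ℤ → Equiv.Perm ℤ) (hD : IsDemazure n D)
    (y : Equiv.Perm ℤ) (hy : IsAffine n y) (hyinv : ∀ x : ℤ, y (y x) = x)
    (w : Equiv.Perm ℤ) (hw : IsAtomOf n D y w)
    (i : ℤ) (h : w⁻¹ (i + 1) < w⁻¹ i) :
    y (w⁻¹ (i + 1)) = w⁻¹ i :=
  atom_descent_cycle_general n hn D hD y w hw i h
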